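/- Let I and J be finite nonempty sets, f : I → J a function, p a probability distribution on I, and for each i ∈ I let ρ_A^i be a density matrix on ℂ^{d_A}. Set ρ_AB := ∑_{i∈I} p_i·ρ_A^i ⊗ |i⟩⟨i| on ℂ^{d_A}⊗ℂ^{|I|} and ρ_ABC := ∑_{i∈I} p_i·ρ_A^i ⊗ |i⟩⟨i| ⊗ |f(i)⟩⟨f(i)| on ℂ^{d_A}⊗ℂ^{|I|}⊗ℂ^{|J|}. Then for every ε ∈ [0,1), H^ε_min(A|B)_{ρ_AB} = H^ε_min(A|BC)_{ρ_ABC}, where on the right the factor ℂ^{|I|}⊗ℂ^{|J|} plays the role of the conditioning system. -/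

import Mathlib

/-!
The map `|i⟩ ↦ |i⟩|f i⟩` is an isometry `V` from `B` to `BC`, and
`ρ_ABC = (𝟙 ⊗ V) ρ_AB (𝟙 ⊗ V)†`, so it suffices that the smooth min-entropy is invariant under
local isometries on the conditioning system. Conjugating a feasible operator `Y` of the
min-entropy program by `V` (resp. `V†`) gives a feasible operator of equal (resp. no larger)
trace; and since `√(VσV†) = V√σV†`, the fidelity between `ρ̃` and `VσV†` equals that between
`V†ρ̃V` and `σ` when `Tr σ = 1`. Hence smoothing candidates around `ρ_AB` are pushed forward
with the same min-entropy, and candidates around `ρ_ABC` are pulled back by `V†` without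
decreasing it: this needs the pulled-back state to be nonzero, which `ε < 1` guarantees.
-/

open Matrix
open scoped Kronecker Classical ComplexOrder

/-- The positive semidefinite square root of a positive semidefinite matrix
(junk value `0` on non-PSD input). -/
noncomputable def msqrt {n : Type*} [Fintype n] [DecidableEq n] (A : Matrix n n ℂ) :
    Matrix n n ℂ :=
  if h : A.PosSemidef then
    (h.1.eigenvectorUnitary : Matrix n n ℂ) * diagonal ((↑) ∘ (√·) ∘ h.1.eigenvalues) *
      (star h.1.eigenvectorUnitary : Matrix n n ℂ)
  else 0

/-- The min-entropy `H_min(A|B)_ρ = −log₂ inf{ Tr(Y) : Y ≥ 0 on B, ρ ≤ 𝟙_A ⊗ Y }`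
of a (subnormalized) state on the bipartite system `A ⊗ B`. -/
noncomputable def Hmin {m n : Type*} [Fintype m] [DecidableEq m] [Fintype n] [DecidableEq n]
    (ρ : Matrix (m × n) (m × n) ℂ) : ℝ :=
  -Real.logb 2
    (sInf {t : ℝ | ∃ Y : Matrix n n ℂ, Y.PosSemidef ∧
      (((1 : Matrix m m ℂ) ⊗ₖ Y) - ρ).PosSemidef ∧ t = (Y.trace).re})

/-- The generalized fidelity
`F(ρ,σ) = Tr √(√σ·ρ·√σ) + √((1 − Tr ρ)(1 − Tr σ))` of subnormalized states. -/
noncomputable def gfid {n : Type*} [Fintype n] [DecidableEq n]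
    (ρ σ : Matrix n n ℂ) : ℝ :=
  ((msqrt (msqrt σ * ρ * msqrt σ)).trace).re +
    Real.sqrt ((1 - (ρ.trace).re) * (1 - (σ.trace).re))

/-- The purified distance `P(ρ,σ) = √(1 − F(ρ,σ)²)`. -/
noncomputable def pdist {n : Type*} [Fintype n] [DecidableEq n]
    (ρ σ : Matrix n n ℂ) : ℝ :=
  Real.sqrt (1 - gfid ρ σ ^ 2)

/-- The smooth min-entropy
`H^ε_min(A|B)_ρ = sup{ H_min(A|B)_ρ̃ : ρ̃ subnormalized, P(ρ̃,ρ) ≤ ε }`. -/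
noncomputable def smoothHmin {m n : Type*} [Fintype m] [DecidableEq m]
    [Fintype n] [DecidableEq n] (ε : ℝ) (ρ : Matrix (m × n) (m × n) ℂ) : ℝ :=
  sSup {t : ℝ | ∃ ρ' : Matrix (m × n) (m × n) ℂ, ρ'.PosSemidef ∧ (ρ'.trace).re ≤ 1 ∧
    pdist ρ' ρ ≤ ε ∧ t = Hmin ρ'}

open scoped MatrixOrder

section Isometry

variable {m p : Type*} [Fintype m] [DecidableEq m] [Fintype p]

lemma Matrix.PosSemidef.re_trace_mul_nonneg {A B : Matrix m m ℂ} (hA : A.PosSemidef)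
    (hB : B.PosSemidef) : 0 ≤ (A * B).trace.re := by
  obtain ⟨C, rfl⟩ := CStarAlgebra.nonneg_iff_eq_star_mul_self.mp hA.nonneg
  rw [star_eq_conjTranspose, Matrix.mul_assoc, trace_mul_comm]
  exact (Complex.le_def.mp (hB.mul_mul_conjTranspose_same C).trace_nonneg).1

lemma re_trace_mul_mul_conjTranspose_le {A : Matrix p m ℂ} (hA : (1 - Aᴴ * A).PosSemidef)
    {Y : Matrix m m ℂ} (hY : Y.PosSemidef) : (A * Y * Aᴴ).trace.re ≤ Y.trace.re := by
  have h : Y.trace - (A * Y * Aᴴ).trace = (Y * (1 - Aᴴ * A)).trace := by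
    rw [Matrix.mul_sub, Matrix.mul_one, trace_sub, trace_mul_comm (A * Y), ← Matrix.mul_assoc,
      trace_mul_comm]
  have := hY.re_trace_mul_nonneg hA
  rw [← h, Complex.sub_re] at this
  linarith

lemma posSemidef_one_sub_mul_conjTranspose [DecidableEq p] {V : Matrix p m ℂ}
    (hV : Vᴴ * V = 1) : (1 - V * Vᴴ).PosSemidef := by
  have hP : (1 - V * Vᴴ)ᴴ * (1 - V * Vᴴ) = 1 - V * Vᴴ := by
    have : V * Vᴴ * (V * Vᴴ) = V * Vᴴ := by
      rw [Matrix.mul_assoc, ← Matrix.mul_assoc Vᴴ, hV, Matrix.one_mul]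
    simp [conjTranspose_sub, Matrix.sub_mul, Matrix.mul_sub, this]
  exact hP ▸ posSemidef_conjTranspose_mul_self _

lemma trace_mul_mul_conjTranspose_of_isometry {W : Matrix p m ℂ} (hW : Wᴴ * W = 1)
    (X : Matrix m m ℂ) : (W * X * Wᴴ).trace = X.trace := by
  rw [trace_mul_cycle, hW, Matrix.one_mul]

end Isometry

section Fidelity

variable {m p : Type*} [Fintype m] [DecidableEq m] [Fintype p] [DecidableEq p]

lemma msqrt_eq_cfcSqrt {A : Matrix m m ℂ} (hA : A.PosSemidef) : msqrt A = CFC.sqrt A := by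
  rw [msqrt, dif_pos hA, CFC.sqrt_eq_real_sqrt A hA.nonneg, cfcₙ_eq_cfc,
    Matrix.IsHermitian.cfc_eq hA.1, Matrix.IsHermitian.cfc, Unitary.conjStarAlgAut_apply]
  rfl

lemma msqrt_zero : msqrt (0 : Matrix m m ℂ) = 0 := by
  rw [msqrt_eq_cfcSqrt PosSemidef.zero, CFC.sqrt_zero]

lemma msqrt_mul_mul_conjTranspose_of_isometry {W : Matrix p m ℂ} (hW : Wᴴ * W = 1)
    {A : Matrix m m ℂ} (hA : A.PosSemidef) : msqrt (W * A * Wᴴ) = W * msqrt A * Wᴴ := by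
  rw [msqrt_eq_cfcSqrt (hA.mul_mul_conjTranspose_same W), msqrt_eq_cfcSqrt hA]
  refine CFC.sqrt_unique ?_ ((CFC.sqrt_nonneg A).posSemidef.mul_mul_conjTranspose_same W).nonneg
  calc W * CFC.sqrt A * Wᴴ * (W * CFC.sqrt A * Wᴴ)
      = W * (CFC.sqrt A * (Wᴴ * W) * CFC.sqrt A) * Wᴴ := by simp only [Matrix.mul_assoc]
    _ = W * A * Wᴴ := by rw [hW, Matrix.mul_one, CFC.sqrt_mul_sqrt_self A hA.nonneg]

-- `Tr σ = 1` makes the second summand of `gfid` vanish on both sides.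
lemma gfid_mul_mul_conjTranspose_right {W : Matrix p m ℂ} (hW : Wᴴ * W = 1)
    {σ : Matrix m m ℂ} (hσ : σ.PosSemidef) (hσtr : σ.trace.re = 1)
    {ρ : Matrix p p ℂ} (hρ : ρ.PosSemidef) :
    gfid ρ (W * σ * Wᴴ) = gfid (Wᴴ * ρ * W) σ := by
  have hs : (msqrt σ)ᴴ = msqrt σ := by
    rw [msqrt_eq_cfcSqrt hσ]; exact (CFC.sqrt_nonneg σ).posSemidef.1.eq
  have hsρs : (msqrt σ * (Wᴴ * ρ * W) * msqrt σ).PosSemidef := by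
    simpa [hs] using (hρ.conjTranspose_mul_mul_same W).conjTranspose_mul_mul_same (msqrt σ)
  have hconj : msqrt (W * σ * Wᴴ) * ρ * msqrt (W * σ * Wᴴ) =
      W * (msqrt σ * (Wᴴ * ρ * W) * msqrt σ) * Wᴴ := by
    rw [msqrt_mul_mul_conjTranspose_of_isometry hW hσ]
    simp only [Matrix.mul_assoc]
  rw [gfid, gfid, hconj, msqrt_mul_mul_conjTranspose_of_isometry hW hsρs,
    trace_mul_mul_conjTranspose_of_isometry hW, trace_mul_mul_conjTranspose_of_isometry hW, hσtr]
  simp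

lemma pdist_zero_left {σ : Matrix m m ℂ} (hσtr : σ.trace.re = 1) : pdist 0 σ = 1 := by
  simp [pdist, gfid, msqrt_zero, hσtr]

lemma re_trace_pos_of_pdist_lt_one {ρ σ : Matrix m m ℂ} (hρ : ρ.PosSemidef)
    (hσtr : σ.trace.re = 1) (h : pdist ρ σ < 1) : 0 < ρ.trace.re := by
  have htr := Complex.le_def.mp hρ.trace_nonneg
  refine htr.1.lt_of_ne fun h0 => ?_
  rw [hρ.trace_eq_zero_iff.mp (Complex.ext h0.symm htr.2.symm), pdist_zero_left hσtr] at h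
  exact h.false

end Fidelity

section Kronecker

variable {α l n₁ n₂ n₃ n₄ : Type*} [CommSemiring α] [Fintype l] [DecidableEq l]

lemma one_kronecker_mul_kronecker_mul_one_kronecker [Fintype n₂] [Fintype n₃]
    (A : Matrix n₁ n₂ α) (X : Matrix l l α) (Y : Matrix n₂ n₃ α) (B : Matrix n₃ n₄ α) :
    ((1 : Matrix l l α) ⊗ₖ A) * (X ⊗ₖ Y) * ((1 : Matrix l l α) ⊗ₖ B) = X ⊗ₖ (A * Y * B) := by
  rw [← mul_kronecker_mul, ← mul_kronecker_mul, Matrix.one_mul, Matrix.mul_one]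

lemma conjTranspose_one_kronecker_mul_one_kronecker [Fintype n₁] [DecidableEq n₂] [StarRing α]
    {V : Matrix n₁ n₂ α} (hV : Vᴴ * V = 1) :
    ((1 : Matrix l l α) ⊗ₖ V)ᴴ * ((1 : Matrix l l α) ⊗ₖ V) = 1 := by
  rw [conjTranspose_kronecker, conjTranspose_one, ← mul_kronecker_mul, Matrix.one_mul, hV,
    one_kronecker_one]

end Kronecker

lemma Matrix.IsHermitian.exists_posSemidef_smul_one_sub {n : Type*} [Fintype n] [DecidableEq n]
    {A : Matrix n n ℂ} (hA : A.IsHermitian) :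
    ∃ r : ℝ, 0 ≤ r ∧ ((r : ℂ) • 1 - A).PosSemidef := by
  obtain ⟨r, hr⟩ := (finite_real_spectrum (A := A)).bddAbove
  refine ⟨max r 0, le_max_right _ _, ?_⟩
  have := le_algebraMap_of_spectrum_le (R := ℝ)
    (fun x hx => (hr hx).trans (le_max_left r 0)) hA.isSelfAdjoint
  rw [Matrix.le_iff, Algebra.algebraMap_eq_smul_one] at this
  simpa using this

section MinEntropy

variable {m n n' : Type*} [DecidableEq m] [Fintype n]

def HminTraces (ρ : Matrix (m × n) (m × n) ℂ) : Set ℝ :=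
  {t : ℝ | ∃ Y : Matrix n n ℂ, Y.PosSemidef ∧
    (((1 : Matrix m m ℂ) ⊗ₖ Y) - ρ).PosSemidef ∧ t = (Y.trace).re}

lemma Hmin_eq_neg_logb_sInf_HminTraces [Fintype m] [DecidableEq n]
    (ρ : Matrix (m × n) (m × n) ℂ) : Hmin ρ = -Real.logb 2 (sInf (HminTraces ρ)) := rfl

lemma nonneg_of_mem_HminTraces {ρ : Matrix (m × n) (m × n) ℂ} {t : ℝ}
    (ht : t ∈ HminTraces ρ) : 0 ≤ t := by
  obtain ⟨Y, hY, -, rfl⟩ := ht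
  exact (Complex.le_def.mp hY.trace_nonneg).1

lemma bddBelow_HminTraces (ρ : Matrix (m × n) (m × n) ℂ) : BddBelow (HminTraces ρ) :=
  ⟨0, fun _ => nonneg_of_mem_HminTraces⟩

lemma HminTraces_nonempty [Fintype m] [DecidableEq n] {ρ : Matrix (m × n) (m × n) ℂ}
    (hρ : ρ.IsHermitian) : (HminTraces ρ).Nonempty := by
  obtain ⟨r, hr, hρr⟩ := hρ.exists_posSemidef_smul_one_sub
  refine ⟨_, (r : ℂ) • 1, PosSemidef.one.smul (by exact_mod_cast hr), ?_, rfl⟩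
  rwa [kronecker_smul, one_kronecker_one]

lemma re_trace_le_card_mul_of_mem_HminTraces [Fintype m] {ρ : Matrix (m × n) (m × n) ℂ}
    {t : ℝ} (ht : t ∈ HminTraces ρ) : ρ.trace.re ≤ Fintype.card m * t := by
  obtain ⟨Y, -, hρY, rfl⟩ := ht
  simpa [trace_sub, trace_kronecker, Complex.mul_re] using
    (Complex.le_def.mp hρY.trace_nonneg).1

lemma exists_mem_HminTraces_one_kronecker_conj_le [Fintype m] [DecidableEq n] [Fintype n']
    {A : Matrix n' n ℂ} (hA : (1 - Aᴴ * A).PosSemidef) {ρ : Matrix (m × n) (m × n) ℂ} {t : ℝ}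
    (ht : t ∈ HminTraces ρ) :
    ∃ s ∈ HminTraces (((1 : Matrix m m ℂ) ⊗ₖ A) * ρ * ((1 : Matrix m m ℂ) ⊗ₖ A)ᴴ), s ≤ t := by
  obtain ⟨Y, hY, hρY, rfl⟩ := ht
  refine ⟨_, ⟨A * Y * Aᴴ, hY.mul_mul_conjTranspose_same A, ?_, rfl⟩,
    re_trace_mul_mul_conjTranspose_le hA hY⟩
  have := hρY.mul_mul_conjTranspose_same ((1 : Matrix m m ℂ) ⊗ₖ A)
  rw [conjTranspose_kronecker, conjTranspose_one] at this ⊢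
  rwa [Matrix.mul_sub, Matrix.sub_mul, one_kronecker_mul_kronecker_mul_one_kronecker] at this

lemma exists_mem_HminTraces_conjTranspose_one_kronecker_conj_le [Fintype m] [DecidableEq n]
    [Fintype n'] [DecidableEq n'] {V : Matrix n' n ℂ} (hV : Vᴴ * V = 1)
    {ρ : Matrix (m × n') (m × n') ℂ} {t : ℝ} (ht : t ∈ HminTraces ρ) :
    ∃ s ∈ HminTraces (((1 : Matrix m m ℂ) ⊗ₖ V)ᴴ * ρ * ((1 : Matrix m m ℂ) ⊗ₖ V)), s ≤ t := by
  have hcontr : (1 - Vᴴᴴ * Vᴴ).PosSemidef := by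
    simpa using posSemidef_one_sub_mul_conjTranspose hV
  simpa [conjTranspose_kronecker] using exists_mem_HminTraces_one_kronecker_conj_le hcontr ht

lemma Hmin_one_kronecker_conj [Fintype m] [DecidableEq n] [Fintype n'] [DecidableEq n']
    {V : Matrix n' n ℂ} (hV : Vᴴ * V = 1) (ρ : Matrix (m × n) (m × n) ℂ) :
    Hmin (((1 : Matrix m m ℂ) ⊗ₖ V) * ρ * ((1 : Matrix m m ℂ) ⊗ₖ V)ᴴ) = Hmin ρ := by
  set W := (1 : Matrix m m ℂ) ⊗ₖ V
  have hW : Wᴴ * W = 1 := conjTranspose_one_kronecker_mul_one_kronecker hV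
  rw [Hmin_eq_neg_logb_sInf_HminTraces, Hmin_eq_neg_logb_sInf_HminTraces]
  congr 2
  refine csInf_eq_csInf_of_forall_exists_le (fun t ht => ?_) (fun t ht => ?_)
  · obtain ⟨s, hs, hst⟩ := exists_mem_HminTraces_conjTranspose_one_kronecker_conj_le hV ht
    rw [Matrix.mul_assoc, Matrix.mul_assoc, hW, Matrix.mul_one, ← Matrix.mul_assoc, hW,
      Matrix.one_mul] at hs
    exact ⟨s, hs, hst⟩
  · exact exists_mem_HminTraces_one_kronecker_conj_le (by simpa [hV] using PosSemidef.zero) ht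

lemma Hmin_le_Hmin_conjTranspose_one_kronecker_conj [Fintype m] [DecidableEq n] [Fintype n']
    [DecidableEq n'] {V : Matrix n' n ℂ} (hV : Vᴴ * V = 1) {ρ : Matrix (m × n') (m × n') ℂ}
    (hρ : ρ.IsHermitian)
    (hpos : 0 < (((1 : Matrix m m ℂ) ⊗ₖ V)ᴴ * ρ * ((1 : Matrix m m ℂ) ⊗ₖ V)).trace.re) :
    Hmin ρ ≤ Hmin (((1 : Matrix m m ℂ) ⊗ₖ V)ᴴ * ρ * ((1 : Matrix m m ℂ) ⊗ₖ V)) := by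
  set W := (1 : Matrix m m ℂ) ⊗ₖ V
  obtain ⟨t₀, ht₀⟩ := HminTraces_nonempty (isHermitian_conjTranspose_mul_mul W hρ)
  have hcard : (0 : ℝ) < Fintype.card m :=
    pos_of_mul_pos_left (hpos.trans_le (re_trace_le_card_mul_of_mem_HminTraces ht₀))
      (nonneg_of_mem_HminTraces ht₀)
  have hinf_pos : 0 < sInf (HminTraces (Wᴴ * ρ * W)) := by
    refine (div_pos hpos hcard).trans_le (le_csInf ⟨t₀, ht₀⟩ fun t ht => ?_)
    rw [div_le_iff₀ hcard, mul_comm]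
    exact re_trace_le_card_mul_of_mem_HminTraces ht
  have hinf_le : sInf (HminTraces (Wᴴ * ρ * W)) ≤ sInf (HminTraces ρ) := by
    refine le_csInf (HminTraces_nonempty hρ) fun t ht => ?_
    obtain ⟨s, hs, hst⟩ := exists_mem_HminTraces_conjTranspose_one_kronecker_conj_le hV ht
    exact (csInf_le (bddBelow_HminTraces _) hs).trans hst
  rw [Hmin_eq_neg_logb_sInf_HminTraces, Hmin_eq_neg_logb_sInf_HminTraces]
  exact neg_le_neg (Real.logb_le_logb_of_le one_lt_two hinf_pos hinf_le)

end MinEntropy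

section SmoothMinEntropy

variable {m n n' : Type*} [Fintype m] [DecidableEq m] [Fintype n] [DecidableEq n]
  [Fintype n'] [DecidableEq n']

theorem smoothHmin_one_kronecker_conj {V : Matrix n' n ℂ} (hV : Vᴴ * V = 1)
    {σ : Matrix (m × n) (m × n) ℂ} (hσ : σ.PosSemidef) (hσtr : σ.trace.re = 1) {ε : ℝ}
    (hε : ε < 1) :
    smoothHmin ε (((1 : Matrix m m ℂ) ⊗ₖ V) * σ * ((1 : Matrix m m ℂ) ⊗ₖ V)ᴴ) =
      smoothHmin ε σ := by
  set W := (1 : Matrix m m ℂ) ⊗ₖ V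
  have hW : Wᴴ * W = 1 := conjTranspose_one_kronecker_mul_one_kronecker hV
  refine csSup_eq_csSup_of_forall_exists_le ?_ ?_
  · rintro _ ⟨ρ, hρ, hρtr, hρσ, rfl⟩
    have hρ' := hρ.conjTranspose_mul_mul_same W
    have hdist : pdist (Wᴴ * ρ * W) σ ≤ ε := by
      rwa [pdist, ← gfid_mul_mul_conjTranspose_right hW hσ hσtr hρ]
    have htr : (Wᴴ * ρ * W).trace.re ≤ 1 := by
      refine le_trans ?_ hρtr
      simpa using re_trace_mul_mul_conjTranspose_le (A := Wᴴ)
        (by simpa using posSemidef_one_sub_mul_conjTranspose hW) hρ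
    exact ⟨_, ⟨Wᴴ * ρ * W, hρ', htr, hdist, rfl⟩,
      Hmin_le_Hmin_conjTranspose_one_kronecker_conj hV hρ.1
        (re_trace_pos_of_pdist_lt_one hρ' hσtr (hdist.trans_lt hε))⟩
  · rintro _ ⟨ρ, hρ, hρtr, hρσ, rfl⟩
    have hdist : pdist (W * ρ * Wᴴ) (W * σ * Wᴴ) ≤ ε := by
      rwa [pdist, gfid_mul_mul_conjTranspose_right hW hσ hσtr
        (hρ.mul_mul_conjTranspose_same W), Matrix.mul_assoc, Matrix.mul_assoc, hW,
        Matrix.mul_one, ← Matrix.mul_assoc, hW, Matrix.one_mul]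
    exact ⟨_, ⟨W * ρ * Wᴴ, hρ.mul_mul_conjTranspose_same W,
      by rwa [trace_mul_mul_conjTranspose_of_isometry hW], hdist, rfl⟩,
      (Hmin_one_kronecker_conj hV ρ).ge⟩

end SmoothMinEntropy

section GraphIsometry

variable {I J : Type*} [Fintype I] [DecidableEq I] [DecidableEq J]

lemma posSemidef_single_one (i : I) : (single i i (1 : ℂ)).PosSemidef := by
  simpa [conjTranspose_single] using posSemidef_conjTranspose_mul_self (single i i (1 : ℂ))

def graphIsometry (f : I → J) : Matrix (I × J) I ℂ :=
  of fun q i => if q = (i, f i) then 1 else 0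

lemma graphIsometry_conjTranspose_mul_self [Fintype J] (f : I → J) :
    (graphIsometry f)ᴴ * graphIsometry f = 1 := by
  ext a b
  by_cases h : b = a
  · simp [graphIsometry, mul_apply, one_apply, h]
  · simp [graphIsometry, mul_apply, one_apply, h, Ne.symm h]

lemma graphIsometry_mul_single (f : I → J) (i : I) :
    graphIsometry f * single i i (1 : ℂ) = single (i, f i) i 1 := by
  ext q c
  by_cases hc : i = c
  · subst hc; simp [graphIsometry, mul_apply, single_apply, eq_comm]
  · simp [graphIsometry, mul_apply, hc]

lemma graphIsometry_mul_single_mul_conjTranspose [Fintype J] (f : I → J) (i : I) :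
    graphIsometry f * single i i (1 : ℂ) * (graphIsometry f)ᴴ =
      single i i (1 : ℂ) ⊗ₖ single (f i) (f i) (1 : ℂ) := by
  have hsingle : single i i (1 : ℂ) = single i i 1 * (single i i 1)ᴴ := by
    simp [conjTranspose_single]
  rw [single_kronecker_single, mul_one]
  conv_lhs => rw [hsingle, ← Matrix.mul_assoc, Matrix.mul_assoc, ← conjTranspose_mul,
    graphIsometry_mul_single, conjTranspose_single, single_mul_single_same]
  simp

end GraphIsometry

theorem stmt_17_general {dA : ℕ} {I J : Type*}
    [Fintype I] [DecidableEq I]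
    [Fintype J] [DecidableEq J]
    (f : I → J) (p : I → ℝ) (hp0 : ∀ i, 0 ≤ p i) (hp1 : ∑ i : I, p i = 1)
    (ρA : I → Matrix (Fin dA) (Fin dA) ℂ)
    (hρA : ∀ i, (ρA i).PosSemidef ∧ (ρA i).trace = 1)
    (ε : ℝ) (hε : ε ∈ Set.Ico (0 : ℝ) 1) :
    smoothHmin ε
        (∑ i : I, (p i : ℂ) • (ρA i ⊗ₖ Matrix.single i i (1 : ℂ))) =
      smoothHmin ε
        (∑ i : I, (p i : ℂ) •
          (ρA i ⊗ₖ (Matrix.single i i (1 : ℂ) ⊗ₖ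
            Matrix.single (f i) (f i) (1 : ℂ)))) := by
  set ρAB := ∑ i : I, (p i : ℂ) • (ρA i ⊗ₖ Matrix.single i i (1 : ℂ))
  have hρAB : ρAB.PosSemidef := posSemidef_sum _ fun i _ =>
    ((hρA i).1.kronecker (posSemidef_single_one i)).smul (by exact_mod_cast hp0 i)
  have hρAB_tr : ρAB.trace.re = 1 := by
    simp only [ρAB, trace_sum, trace_smul, trace_kronecker, (hρA _).2, trace_single_eq_same,
      mul_one, Complex.coe_smul, Complex.real_smul, Complex.re_sum, Complex.ofReal_re]
    exact_mod_cast hp1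
  have hρABC : ((1 : Matrix (Fin dA) (Fin dA) ℂ) ⊗ₖ graphIsometry f) * ρAB *
      ((1 : Matrix (Fin dA) (Fin dA) ℂ) ⊗ₖ graphIsometry f)ᴴ =
      ∑ i : I, (p i : ℂ) • (ρA i ⊗ₖ (single i i (1 : ℂ) ⊗ₖ single (f i) (f i) (1 : ℂ))) := by
    simp only [ρAB, Matrix.mul_sum, Matrix.sum_mul, Matrix.mul_smul, Matrix.smul_mul,
      conjTranspose_kronecker, conjTranspose_one, one_kronecker_mul_kronecker_mul_one_kronecker,
      graphIsometry_mul_single_mul_conjTranspose]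
  rw [← hρABC, smoothHmin_one_kronecker_conj (graphIsometry_conjTranspose_mul_self f) hρAB
    hρAB_tr hε.2]

/-- generating a classical register `C = f(B)` from the classical side
information `B` does not change the smooth min-entropy:
`H^ε_min(A|B)_{ρ_AB} = H^ε_min(A|BC)_{ρ_ABC}`. -/
theorem stmt_17 {dA : ℕ} {I J : Type*}
    [Fintype I] [DecidableEq I] [Nonempty I]
    [Fintype J] [DecidableEq J] [Nonempty J]
    (f : I → J) (p : I → ℝ) (hp0 : ∀ i, 0 ≤ p i) (hp1 : ∑ i : I, p i = 1)
    (ρA : I → Matrix (Fin dA) (Fin dA) ℂ)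
    (hρA : ∀ i, (ρA i).PosSemidef ∧ (ρA i).trace = 1)
    (ε : ℝ) (hε : ε ∈ Set.Ico (0 : ℝ) 1) :
    smoothHmin ε
        (∑ i : I, (p i : ℂ) • (ρA i ⊗ₖ Matrix.single i i (1 : ℂ))) =
      smoothHmin ε
        (∑ i : I, (p i : ℂ) •
          (ρA i ⊗ₖ (Matrix.single i i (1 : ℂ) ⊗ₖ
            Matrix.single (f i) (f i) (1 : ℂ)))) :=
  stmt_17_general f p hp0 hp1 ρA hρA ε hε
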